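/- Let a > b > 0 be coprime positive integers. Then the infimum over r ∈ (0, π/2) of K(r) = (3a⁴ + 26a²b² + 3b⁴ + 4(a⁴-b⁴)cos 2r + (a²-b²)²cos 4r) / (2(a²+b² + (a²-b²)cos 2r)²) is 1 + 3b²/a², which is strictly greater than 1 and strictly less than 4. -/

import Mathlib

open Real Set

/-!
Since `1 + cos 2r = 2 cos² r` and `1 - cos 2r = 2 sin² r`, the curvature is
`K r = 1 + 3a²b² / (a² cos² r + b² sin² r)²`. For `b ≤ a` the denominator is at most
`a⁴`, with equality at `r = 0`; so `K` attains its global minimum `1 + 3b²/a²` at the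
endpoint `0`, and by continuity this is the infimum over the open interval `(0, π/2)`.
-/

theorem csInf_image_Ioo_eq_of_le {α β : Type*} [LinearOrder α] [TopologicalSpace α]
    [OrderTopology α] [DenselyOrdered α] [ConditionallyCompleteLinearOrder β]
    [TopologicalSpace β] [OrderTopology β] {f : α → β} {x y : α} (hxy : x < y)
    (hf : ContinuousWithinAt f (Ioo x y) x) (hle : ∀ r ∈ Ioo x y, f x ≤ f r) :
    sInf (f '' Ioo x y) = f x := by
  have hx : x ∈ closure (Ioo x y) := by
    rw [closure_Ioo hxy.ne]
    exact left_mem_Icc.2 hxy.le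
  refine (isGLB_of_mem_closure ?_ (hf.mem_closure_image hx)).csInf_eq
    ((nonempty_Ioo.2 hxy).image f)
  rintro _ ⟨r, hr, rfl⟩
  exact hle r hr

theorem sq_mul_cos_sq_add_sq_mul_sin_sq_pos {a b : ℝ} (ha : a ≠ 0) (hb : b ≠ 0) (r : ℝ) :
    0 < a ^ 2 * cos r ^ 2 + b ^ 2 * sin r ^ 2 := by
  have ha2 : 0 < a ^ 2 := by positivity
  have hb2 : 0 < b ^ 2 := by positivity
  nlinarith [sin_sq_add_cos_sq r, mul_pos ha2 hb2,
    mul_nonneg (pow_pos ha2 2).le (sq_nonneg (cos r)),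
    mul_nonneg (pow_pos hb2 2).le (sq_nonneg (sin r))]

theorem sq_mul_cos_sq_add_sq_mul_sin_sq_le {a b : ℝ} (hba : b ^ 2 ≤ a ^ 2) (r : ℝ) :
    a ^ 2 * cos r ^ 2 + b ^ 2 * sin r ^ 2 ≤ a ^ 2 := by
  nlinarith [sin_sq_add_cos_sq r, sq_nonneg (sin r)]

theorem weightedProjectiveLine_curvature_eq {a b : ℝ} (ha : a ≠ 0) (hb : b ≠ 0) (r : ℝ) :
    (3 * a ^ 4 + 26 * a ^ 2 * b ^ 2 + 3 * b ^ 4 + 4 * (a ^ 4 - b ^ 4) * cos (2 * r)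
        + (a ^ 2 - b ^ 2) ^ 2 * cos (4 * r)) /
      (2 * (a ^ 2 + b ^ 2 + (a ^ 2 - b ^ 2) * cos (2 * r)) ^ 2) =
    1 + 3 * a ^ 2 * b ^ 2 / (a ^ 2 * cos r ^ 2 + b ^ 2 * sin r ^ 2) ^ 2 := by
  have hq := (sq_mul_cos_sq_add_sq_mul_sin_sq_pos ha hb r).ne'
  have hcos4 : cos (4 * r) = 2 * cos (2 * r) ^ 2 - 1 := by
    rw [show 4 * r = 2 * (2 * r) by ring, cos_two_mul]
  have hden : a ^ 2 + b ^ 2 + (a ^ 2 - b ^ 2) * cos (2 * r) =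
      2 * (a ^ 2 * cos r ^ 2 + b ^ 2 * sin r ^ 2) := by
    rw [cos_two_mul, sin_sq]; ring
  rw [hden, div_eq_iff (by positivity)]
  field_simp
  rw [hcos4, cos_two_mul, sin_sq]
  ring

theorem stmt3_general (a b : ℕ) (hb : 0 < b) (hab : b < a)
    (K : ℝ → ℝ)
    (hK : ∀ r, K r =
      (3*(a:ℝ)^4 + 26*(a:ℝ)^2*(b:ℝ)^2 + 3*(b:ℝ)^4
          + 4*((a:ℝ)^4 - (b:ℝ)^4) * Real.cos (2*r)
          + ((a:ℝ)^2 - (b:ℝ)^2)^2 * Real.cos (4*r)) /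
        (2 * ((a:ℝ)^2 + (b:ℝ)^2 + ((a:ℝ)^2 - (b:ℝ)^2) * Real.cos (2*r))^2)) :
    sInf (K '' Set.Ioo 0 (Real.pi/2)) = 1 + 3*(b:ℝ)^2/(a:ℝ)^2 ∧
    1 < 1 + 3*(b:ℝ)^2/(a:ℝ)^2 ∧
    1 + 3*(b:ℝ)^2/(a:ℝ)^2 < 4 := by
  have hb0 : (0 : ℝ) < b := by exact_mod_cast hb
  have hba : (b : ℝ) < a := by exact_mod_cast hab
  have ha0 : (0 : ℝ) < a := hb0.trans hba
  have hba2 : (b : ℝ) ^ 2 < (a : ℝ) ^ 2 := by gcongr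
  set q : ℝ → ℝ := fun r => (a : ℝ) ^ 2 * cos r ^ 2 + (b : ℝ) ^ 2 * sin r ^ 2
  have hKq : K = fun r => 1 + 3 * (a : ℝ) ^ 2 * (b : ℝ) ^ 2 / q r ^ 2 :=
    funext fun r => (hK r).trans (weightedProjectiveLine_curvature_eq ha0.ne' hb0.ne' r)
  have hq0 : q 0 = (a : ℝ) ^ 2 := by simp [q]
  have hK0 : K 0 = 1 + 3 * (b : ℝ) ^ 2 / (a : ℝ) ^ 2 := by
    rw [hKq]; dsimp only; rw [hq0]; field_simp
  have hmin : ∀ r, K 0 ≤ K r := fun r => by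
    rw [hKq]
    dsimp only
    rw [hq0]
    gcongr
    · exact pow_pos (sq_mul_cos_sq_add_sq_mul_sin_sq_pos ha0.ne' hb0.ne' r) 2
    · exact sq_mul_cos_sq_add_sq_mul_sin_sq_le hba2.le r
  have hcont : ContinuousAt K 0 := by
    rw [hKq]
    refine continuousAt_const.add (continuousAt_const.div (by fun_prop) ?_)
    simp only [hq0]
    positivity
  refine ⟨?_, lt_add_of_pos_right 1 (by positivity), ?_⟩
  · rw [csInf_image_Ioo_eq_of_le (by positivity) hcont.continuousWithinAt
      fun r _ => hmin r, hK0]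
  · have : 3 * (b : ℝ) ^ 2 / (a : ℝ) ^ 2 < 3 := by
      rw [div_lt_iff₀ (by positivity)]; linarith
    linarith

/-- For coprime integers `a > b > 0`, the infimum over `(0, π/2)` of the Gaussian
curvature `K` of the complex weighted projective line with weights `(a, b)` equals
`1 + 3b²/a²`, which lies strictly between `1` and `4`. -/
theorem stmt3 (a b : ℕ) (hb : 0 < b) (hab : b < a) (hcop : Nat.Coprime a b)
    (K : ℝ → ℝ)
    (hK : ∀ r, K r =
      (3*(a:ℝ)^4 + 26*(a:ℝ)^2*(b:ℝ)^2 + 3*(b:ℝ)^4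
          + 4*((a:ℝ)^4 - (b:ℝ)^4) * Real.cos (2*r)
          + ((a:ℝ)^2 - (b:ℝ)^2)^2 * Real.cos (4*r)) /
        (2 * ((a:ℝ)^2 + (b:ℝ)^2 + ((a:ℝ)^2 - (b:ℝ)^2) * Real.cos (2*r))^2)) :
    sInf (K '' Set.Ioo 0 (Real.pi/2)) = 1 + 3*(b:ℝ)^2/(a:ℝ)^2 ∧
    1 < 1 + 3*(b:ℝ)^2/(a:ℝ)^2 ∧
    1 + 3*(b:ℝ)^2/(a:ℝ)^2 < 4 :=
  stmt3_general a b hb hab K hK
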